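/- Let M and N be real symmetric positive semidefinite d×d matrices with M ⪯ N, and suppose both M and N are singular (each has smallest eigenvalue 0). Let λ > 0 and α ≥ 0 be real numbers. Then cond(M + (α + λ)·I_d) ≤ cond(N + λ·I_d), where for a positive definite matrix P, cond(P) denotes the ratio of the largest eigenvalue of P to the smallest eigenvalue of P. -/

import Mathlib

/-!
Adding `c • 1` shifts the spectrum by `c`, and the spectrum of a singular positive semidefinite
matrix has infimum `0`, so `cond (P + c • 1) = (λ_max P + c) / c = 1 + λ_max P / c`.
Since `M ≤ N ≤ λ_max N • 1` in the Loewner order, the continuous functional calculus gives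
`λ_max M ≤ λ_max N`; together with `λ ≤ α + λ` this compares the two condition numbers.
-/

open Matrix

/-- Condition number of a (positive definite) real matrix: the ratio of its largest
eigenvalue to its smallest eigenvalue, expressed via the real spectrum. -/
noncomputable def matrixCond {d : ℕ} (P : Matrix (Fin d) (Fin d) ℝ) : ℝ :=
  sSup (spectrum ℝ P) / sInf (spectrum ℝ P)

open scoped MatrixOrder Pointwise

section Spectrum

variable {A : Type*} [Ring A] [Algebra ℝ A]

lemma spectrum_add_algebraMap (a : A) (c : ℝ) :
    spectrum ℝ (a + algebraMap ℝ A c) = spectrum ℝ a + {c} :=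
  (spectrum.add_singleton_eq a c).symm

lemma csSup_spectrum_add_algebraMap {a : A} (hne : (spectrum ℝ a).Nonempty)
    (hbdd : BddAbove (spectrum ℝ a)) (c : ℝ) :
    sSup (spectrum ℝ (a + algebraMap ℝ A c)) = sSup (spectrum ℝ a) + c := by
  rw [spectrum_add_algebraMap, csSup_add hne hbdd (Set.singleton_nonempty c) bddAbove_singleton,
    csSup_singleton]

lemma csInf_spectrum_add_algebraMap {a : A} (hne : (spectrum ℝ a).Nonempty)
    (hbdd : BddBelow (spectrum ℝ a)) (c : ℝ) :
    sInf (spectrum ℝ (a + algebraMap ℝ A c)) = sInf (spectrum ℝ a) + c := by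
  rw [spectrum_add_algebraMap, csInf_add hne hbdd (Set.singleton_nonempty c) bddBelow_singleton,
    csInf_singleton]

lemma csInf_spectrum_eq_zero_of_nonneg [PartialOrder A] [NonnegSpectrumClass ℝ A] {a : A}
    (ha : 0 ≤ a) (h0 : 0 ∈ spectrum ℝ a) : sInf (spectrum ℝ a) = 0 :=
  IsLeast.csInf_eq ⟨h0, fun _ hx => spectrum_nonneg_of_nonneg ha hx⟩

end Spectrum

section CFC

variable {A : Type*} [TopologicalSpace A] [Ring A] [StarRing A] [PartialOrder A]
  [StarOrderedRing A] [Algebra ℝ A] [ContinuousFunctionalCalculus ℝ A IsSelfAdjoint]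
  [NonnegSpectrumClass ℝ A]

lemma csSup_spectrum_mono {a b : A} (hab : a ≤ b) (hne : (spectrum ℝ a).Nonempty)
    (ha : IsSelfAdjoint a := by cfc_tac) (hb : IsSelfAdjoint b := by cfc_tac) :
    sSup (spectrum ℝ a) ≤ sSup (spectrum ℝ b) := by
  have hb_le : b ≤ algebraMap ℝ A (sSup (spectrum ℝ b)) :=
    le_algebraMap_of_spectrum_le fun _ hx =>
      le_csSup (ContinuousFunctionalCalculus.isCompact_spectrum b).bddAbove hx
  exact csSup_le hne ((le_algebraMap_iff_spectrum_le ha).mp (hab.trans hb_le))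

end CFC

lemma matrixCond_add_smul_one {d : ℕ} {P : Matrix (Fin d) (Fin d) ℝ} (hP : P.PosSemidef)
    (h0 : 0 ∈ spectrum ℝ P) (c : ℝ) :
    matrixCond (P + c • (1 : Matrix (Fin d) (Fin d) ℝ)) = (sSup (spectrum ℝ P) + c) / c := by
  have hfin : (spectrum ℝ P).Finite := Matrix.finite_real_spectrum
  rw [matrixCond, ← Algebra.algebraMap_eq_smul_one,
    csSup_spectrum_add_algebraMap ⟨0, h0⟩ hfin.bddAbove,
    csInf_spectrum_add_algebraMap ⟨0, h0⟩ hfin.bddBelow,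
    csInf_spectrum_eq_zero_of_nonneg hP.nonneg h0, zero_add]

theorem rfd_well_conditioned_two_general {d : ℕ}
    (M N : Matrix (Fin d) (Fin d) ℝ) (hM : M.PosSemidef) (hN : N.PosSemidef)
    (hMN : (N - M).PosSemidef)
    (hMsing : 0 ∈ spectrum ℝ M) (hNsing : 0 ∈ spectrum ℝ N)
    (lam α : ℝ) (hlam : 0 < lam) (hα : 0 ≤ α) :
    matrixCond (M + (α + lam) • (1 : Matrix (Fin d) (Fin d) ℝ))
      ≤ matrixCond (N + lam • (1 : Matrix (Fin d) (Fin d) ℝ)) := by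
  rw [matrixCond_add_smul_one hM hMsing, matrixCond_add_smul_one hN hNsing]
  set a := sSup (spectrum ℝ M)
  set b := sSup (spectrum ℝ N)
  have hab : a ≤ b := csSup_spectrum_mono (Matrix.le_iff.mpr hMN) ⟨0, hMsing⟩
    hM.isHermitian.isSelfAdjoint hN.isHermitian.isSelfAdjoint
  have ha : 0 ≤ a := le_csSup Matrix.finite_real_spectrum.bddAbove hMsing
  calc (a + (α + lam)) / (α + lam) = a / (α + lam) + 1 := by field_simp
    _ ≤ b / lam + 1 := by gcongr <;> linarith
    _ = (b + lam) / lam := by field_simp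

/-- **Well-conditioned property of RFD, part 2.**  If `M ⪯ N` are symmetric PSD matrices,
both singular (smallest eigenvalue `0`), then for `λ > 0` and `α ≥ 0`,
`matrixCond (M + (α + λ)·I) ≤ matrixCond (N + λ·I)`. -/
theorem rfd_well_conditioned_two {d : ℕ} (hd : 0 < d)
    (M N : Matrix (Fin d) (Fin d) ℝ) (hM : M.PosSemidef) (hN : N.PosSemidef)
    (hMN : (N - M).PosSemidef)
    (hMsing : 0 ∈ spectrum ℝ M) (hNsing : 0 ∈ spectrum ℝ N)
    (lam α : ℝ) (hlam : 0 < lam) (hα : 0 ≤ α) :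
    matrixCond (M + (α + lam) • (1 : Matrix (Fin d) (Fin d) ℝ))
      ≤ matrixCond (N + lam • (1 : Matrix (Fin d) (Fin d) ℝ)) :=
  rfd_well_conditioned_two_general M N hM hN hMN hMsing hNsing lam α hlam hα
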